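/- Suppose that for every ε > 0, P(sup_{0<u<t} X_u/h(u) ≥ σ_0 sqrt(1+ε)) = exp(−ε(log log(1/t))(1+o(1))) as t → 0, and that sup_{0<u<t} X_u/h(u) ≥ σ_0 almost surely for all small t. Then for any nonempty open set O ⊆ ℝ, liminf_{t→0} (log log(1/t))^{-1} log P(sup_{0<u<t} X_u/h(u) ∈ O) ≥ −inf_{x∈O} J(x), where J(x) = (x/σ_0)² − 1 for x ≥ σ_0 and ∞ otherwise. -/

import Mathlib

open MeasureTheory Filter Real Set
open scoped Topology ENNReal

/-!
For `x ≥ σ₀` the tail `P(Y_t ≥ x)` decays like `exp(-J(x) L_t)` with `L_t = log log (1/t)` (at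
`x = σ₀` the rate is `0` since `Y_t ≥ σ₀` a.s.). An open `O ∋ x` contains a window `[x, u)`, and
`P(Y_t ∈ [x, u)) ≥ P(Y_t ≥ x) - P(Y_t ≥ u)`; because `J(u) > J(x)`, the second tail is eventually
at most half of the first, so `P(Y_t ∈ O) ≥ exp(-J(x) L_t (1 + o(1))) / 2`.
-/

def HasExpRate {α : Type*} (l : Filter α) (L : α → ℝ) (p : α → ℝ≥0∞) (a : ℝ) : Prop :=
  ∃ e : α → ℝ, Tendsto e l (𝓝 0) ∧ ∀ᶠ t in l, p t = ENNReal.ofReal (exp (-a * L t * (1 + e t)))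

lemma tendsto_log_log_one_div_nhdsGT_zero :
    Tendsto (fun t : ℝ => log (log (1 / t))) (𝓝[>] 0) atTop := by
  have h : Tendsto (fun t : ℝ => 1 / t) (𝓝[>] 0) atTop := by
    simpa only [one_div] using tendsto_inv_nhdsGT_zero (𝕜 := ℝ)
  exact tendsto_log_atTop.comp (tendsto_log_atTop.comp h)

section Asymptotics

variable {α : Type*} {l : Filter α} {L : α → ℝ}

lemma HasExpRate.of_eventually_eq_one {p : α → ℝ≥0∞} (hp : ∀ᶠ t in l, p t = 1) :
    HasExpRate l L p 0 :=
  ⟨0, tendsto_const_nhds, by filter_upwards [hp] with t ht; simp [ht]⟩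

lemma eventually_exp_le_half_exp_of_lt {e₁ e₂ : α → ℝ} {a b : ℝ} (hL : Tendsto L l atTop)
    (he₁ : Tendsto e₁ l (𝓝 0)) (he₂ : Tendsto e₂ l (𝓝 0)) (hab : a < b) :
    ∀ᶠ t in l, exp (-b * L t * (1 + e₂ t)) ≤ exp (-a * L t * (1 + e₁ t)) / 2 := by
  have hgap : Tendsto (fun t => b * (1 + e₂ t) - a * (1 + e₁ t)) l (𝓝 (b - a)) := by
    simpa using ((he₂.const_add 1).const_mul b).sub ((he₁.const_add 1).const_mul a)
  filter_upwards [(hL.atTop_mul_pos (sub_pos.2 hab) hgap).eventually_ge_atTop (log 2)] with t ht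
  rw [le_div_iff₀ two_pos, ← exp_log two_pos, ← exp_add, exp_le_exp]
  linear_combination ht

lemma le_liminf_inv_mul_log_of_exp_le [l.NeBot] {g : α → ℝ} {m : α → ℝ≥0∞} {c : ℝ}
    (hL : ∀ᶠ t in l, 0 < L t) (hg : Tendsto g l (𝓝 c))
    (hm : ∀ᶠ t in l, ENNReal.ofReal (exp (L t * g t)) ≤ m t) :
    (c : EReal) ≤ liminf (fun t => ((L t)⁻¹ : ℝ) * ENNReal.log (m t)) l := by
  calc (c : EReal) = liminf (fun t => (g t : EReal)) l :=
        ((EReal.tendsto_coe.2 hg).liminf_eq).symm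
    _ ≤ _ := by
      refine liminf_le_liminf ?_
      filter_upwards [hL, hm] with t hLt hmt
      calc (g t : EReal) = ((L t)⁻¹ : ℝ) * ENNReal.log (ENNReal.ofReal (exp (L t * g t))) := by
            rw [ENNReal.log_ofReal_of_pos (exp_pos _), log_exp, ← EReal.coe_mul,
              inv_mul_cancel_left₀ hLt.ne']
        _ ≤ _ := mul_le_mul_of_nonneg_left (ENNReal.log_le_log hmt)
              (EReal.coe_nonneg.2 (inv_nonneg.2 hLt.le))

lemma HasExpRate.neg_le_liminf_log_measure [l.NeBot] {Ω : Type*} [MeasurableSpace Ω]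
    {μ : Measure Ω} {A B C : α → Set Ω} {a b : ℝ} (hA : HasExpRate l L (fun t => μ (A t)) a)
    (hB : HasExpRate l L (fun t => μ (B t)) b) (hab : a < b) (hL : Tendsto L l atTop)
    (hC : ∀ t, A t \ B t ⊆ C t) :
    ((-a : ℝ) : EReal) ≤ liminf (fun t => ((L t)⁻¹ : ℝ) * ENNReal.log (μ (C t))) l := by
  obtain ⟨e₁, he₁, hAe⟩ := hA
  obtain ⟨e₂, he₂, hBe⟩ := hB
  have hLpos := hL.eventually_gt_atTop 0
  have hg : Tendsto (fun t => -a * (1 + e₁ t) - (L t)⁻¹ * log 2) l (𝓝 (-a)) := by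
    simpa using ((he₁.const_add 1).const_mul (-a)).sub (hL.inv_tendsto_atTop.mul_const (log 2))
  refine le_liminf_inv_mul_log_of_exp_le hLpos hg ?_
  filter_upwards [hAe, hBe, eventually_exp_le_half_exp_of_lt hL he₁ he₂ hab, hLpos]
    with t hAt hBt hhalf hLt
  set p := exp (-a * L t * (1 + e₁ t))
  calc ENNReal.ofReal (exp (L t * (-a * (1 + e₁ t) - (L t)⁻¹ * log 2)))
        = ENNReal.ofReal (p / 2) := by
        rw [mul_sub, mul_inv_cancel_left₀ hLt.ne', exp_sub, exp_log two_pos,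
          show L t * (-a * (1 + e₁ t)) = -a * L t * (1 + e₁ t) by ring]
    _ ≤ ENNReal.ofReal (p - exp (-b * L t * (1 + e₂ t))) := ENNReal.ofReal_le_ofReal (by linarith)
    _ = μ (A t) - μ (B t) := by rw [hAt, hBt, ENNReal.ofReal_sub _ (exp_pos _).le]
    _ ≤ μ (A t \ B t) := le_measure_sdiff
    _ ≤ μ (C t) := measure_mono (hC t)

end Asymptotics

lemma hasExpRate_tail_of_le {Ω : Type*} [MeasurableSpace Ω] {P : Measure Ω}
    [IsProbabilityMeasure P] {σ₀ : ℝ} (hpos : 0 < σ₀) {Y : ℝ → Ω → ℝ}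
    (htail : ∀ ε > (0 : ℝ), HasExpRate (𝓝[>] 0) (fun t => log (log (1 / t)))
      (fun t => P {ω | σ₀ * √(1 + ε) ≤ Y t ω}) ε)
    (hge : ∀ᶠ t in 𝓝[>] (0 : ℝ), ∀ᵐ ω ∂P, σ₀ ≤ Y t ω) {x : ℝ} (hx : σ₀ ≤ x) :
    HasExpRate (𝓝[>] 0) (fun t => log (log (1 / t))) (fun t => P {ω | x ≤ Y t ω})
      ((x / σ₀) ^ 2 - 1) := by
  rcases hx.eq_or_lt with rfl | hlt
  · rw [div_self hpos.ne', one_pow, sub_self]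
    refine HasExpRate.of_eventually_eq_one ?_
    filter_upwards [hge] with t ht
    rw [measure_congr (ae_eq_univ.2 ht), measure_univ]
  · have hε : 0 < (x / σ₀) ^ 2 - 1 := by
      rw [sub_pos, one_lt_sq_iff₀ (div_pos (hpos.trans hlt) hpos).le, one_lt_div hpos]
      exact hlt
    have hlevel : σ₀ * √(1 + ((x / σ₀) ^ 2 - 1)) = x := by
      rw [add_sub_cancel, sqrt_sq (div_pos (hpos.trans hlt) hpos).le, mul_div_cancel₀ _ hpos.ne']
    simpa only [hlevel] using htail _ hε

theorem ldp_lower_bound_from_tails_general {Ω : Type*} [MeasurableSpace Ω] (P : Measure Ω)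
    [IsProbabilityMeasure P] (σ₀ : ℝ) (hpos : 0 < σ₀) (Y : ℝ → Ω → ℝ)
    (htail : ∀ ε > (0 : ℝ), ∃ e : ℝ → ℝ, Tendsto e (𝓝[>] (0 : ℝ)) (𝓝 0) ∧
      ∀ᶠ t in 𝓝[>] (0 : ℝ),
        P {ω | σ₀ * Real.sqrt (1 + ε) ≤ Y t ω}
          = ENNReal.ofReal (Real.exp (-ε * Real.log (Real.log (1 / t)) * (1 + e t))))
    (hge : ∀ᶠ t in 𝓝[>] (0 : ℝ), ∀ᵐ ω ∂P, σ₀ ≤ Y t ω)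
    (O : Set ℝ) (hO : IsOpen O) :
    -(⨅ x ∈ O, (if σ₀ ≤ x then (((x / σ₀) ^ 2 - 1 : ℝ) : EReal) else ⊤))
      ≤ Filter.liminf (fun t =>
          ((Real.log (Real.log (1 / t)))⁻¹ : ℝ) * ENNReal.log (P {ω | Y t ω ∈ O}))
        (𝓝[>] (0 : ℝ)) := by
  rw [EReal.neg_le]
  refine le_iInf₂ fun x hx => ?_
  split_ifs with hσx
  · obtain ⟨u, hxu, hwindow⟩ := exists_Ico_subset_of_mem_nhds (hO.mem_nhds hx) ⟨x + 1, by linarith⟩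
    have hrate_lt : (x / σ₀) ^ 2 - 1 < (u / σ₀) ^ 2 - 1 := by
      have : 0 ≤ x / σ₀ := div_nonneg (hpos.le.trans hσx) hpos.le
      gcongr
    rw [← EReal.neg_le, ← EReal.coe_neg]
    exact (hasExpRate_tail_of_le hpos htail hge hσx).neg_le_liminf_log_measure
      (hasExpRate_tail_of_le hpos htail hge (hσx.trans hxu.le)) hrate_lt
      tendsto_log_log_one_div_nhdsGT_zero fun t ω hω => hwindow ⟨hω.1, not_le.1 hω.2⟩
  · exact le_top

/-- Abstract LDP lower bound: if `P(Y_t ≥ σ₀√(1+ε)) = exp(−ε(log log(1/t))(1+o(1)))` for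
every `ε > 0` and `Y_t ≥ σ₀` a.s. for small `t`, then for every nonempty open `O ⊆ ℝ`,
`liminf_{t→0} (log log(1/t))⁻¹ log P(Y_t ∈ O) ≥ −inf_O J`, where `J(x) = (x/σ₀)² − 1`
for `x ≥ σ₀` and `J = ∞` otherwise. -/
theorem ldp_lower_bound_from_tails {Ω : Type*} [MeasurableSpace Ω] (P : Measure Ω)
    [IsProbabilityMeasure P] (σ₀ : ℝ) (hpos : 0 < σ₀) (Y : ℝ → Ω → ℝ)
    (htail : ∀ ε > (0 : ℝ), ∃ e : ℝ → ℝ, Tendsto e (𝓝[>] (0 : ℝ)) (𝓝 0) ∧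
      ∀ᶠ t in 𝓝[>] (0 : ℝ),
        P {ω | σ₀ * Real.sqrt (1 + ε) ≤ Y t ω}
          = ENNReal.ofReal (Real.exp (-ε * Real.log (Real.log (1 / t)) * (1 + e t))))
    (hge : ∀ᶠ t in 𝓝[>] (0 : ℝ), ∀ᵐ ω ∂P, σ₀ ≤ Y t ω)
    (O : Set ℝ) (hO : IsOpen O) (hne : O.Nonempty) :
    -(⨅ x ∈ O, (if σ₀ ≤ x then (((x / σ₀) ^ 2 - 1 : ℝ) : EReal) else ⊤))
      ≤ Filter.liminf (fun t =>
          ((Real.log (Real.log (1 / t)))⁻¹ : ℝ) * ENNReal.log (P {ω | Y t ω ∈ O}))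
        (𝓝[>] (0 : ℝ)) :=
  ldp_lower_bound_from_tails_general P σ₀ hpos Y htail hge O hO
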